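/- Let F₂ be the free group on generators g and h, and let p ≥ 3. Suppose A = {v₁gᵖv₁', ..., vₙgᵖvₙ'} is a set of reduced words in F₂ such that each vᵢ and vᵢ' is an alternating word in which g or g⁻¹ alternates with nonzero powers of h, with vᵢ ending in a power of h and vᵢ' beginning with a power of h, and the word lengths satisfy L(v_{i+1}) > L(vᵢ) and L(v_{i+1}') > L(vᵢ') for all i. Then any nonempty reduced word w in the elements of A and their inverses (i.e., a product of elements of A∪A⁻¹ with no two consecutive cancelling factors) is not equal to the identity of F₂. In particular, the subgroup of F₂ generated by A is free of rank n with free basis A. -/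

import Mathlib

/-!
Statement 0 (word lemma, Lemma 2.3 of the paper).

`F₂` is the free group on two generators `g = of 0` and `h = of 1`.
An "alternating word in which `g` or `g⁻¹` alternates with nonzero powers of `h`"
is encoded (on the reduced word, via `FreeGroup.toWord`) by the condition that no two
consecutive letters are both `g`-letters; such a word may be empty.
"Ends in a power of `h`" / "begins with a power of `h`" are conditions on the last/first
letter of the reduced word (an empty word is allowed, matching `v₁ = e` in the paper).
The conclusion "every nonempty reduced word in `A ∪ A⁻¹` is ≠ e" and "A is a free basis of
a free subgroup of rank n" are both expressed via the lift `FreeGroup (Fin n) →* F₂`.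
-/

namespace Stmt0

abbrev F2 := FreeGroup (Fin 2)

/-- the generator `g` -/
def g : F2 := FreeGroup.of 0
/-- the generator `h` -/
def h : F2 := FreeGroup.of 1

/-- a reduced word in which `g^{±1}` alternates with (nonzero) powers of `h`:
no two consecutive letters are `g`-letters. -/
def AltGwithHpowers (w : F2) : Prop :=
  List.Chain' (fun a b : Fin 2 × Bool => ¬(a.1 = 0 ∧ b.1 = 0)) w.toWord

/-- `w` ends with a power of `h` (or is empty). -/
def EndsWithH (w : F2) : Prop :=
  w.toWord = [] ∨ w.toWord.getLast?.map Prod.fst = some 1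

/-- `w` begins with a power of `h` (or is empty). -/
def StartsWithH (w : F2) : Prop :=
  w.toWord = [] ∨ w.toWord.head?.map Prod.fst = some 1

/-!
Ping-pong. Let `X i` be the reduced words beginning with `vᵢ g²` and `Y i` those beginning
with `vᵢ'⁻¹ g⁻²`. A word `vᵢ` without two consecutive `g`-letters and ending in `h` is read off
from any element of `X i` as the part before the first `g^{±2}`, so these sets are pairwise
disjoint. If `x ∉ Y i`, then `vᵢ' x` does not begin with `g⁻²`, so at most one letter of `gᵖ`
cancels in `gᵖ vᵢ' x`, which therefore begins with `g²` as `p ≥ 3`; and `vᵢ` ends in `h`, so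
`vᵢ gᵖ vᵢ' x ∈ X i`. Symmetrically the inverse maps the complement of `X i` into `Y i`.
The ping-pong lemma is stated for at least two indices, so the family is first padded with two
powers of `h` longer than all `vᵢ`, `vᵢ'`.
-/

open List FreeGroup Pointwise

section Words

variable {α : Type*} [DecidableEq α]

theorem toWord_mul_of_isReduced {x y : FreeGroup α} (h : IsReduced (x.toWord ++ y.toWord)) :
    (x * y).toWord = x.toWord ++ y.toWord := by
  rw [toWord_mul, h.reduce_eq]

theorem toWord_mul_of_fst_ne {x y : FreeGroup α}
    (h : ∀ a ∈ x.toWord.getLast?, ∀ b ∈ y.toWord.head?, a.1 ≠ b.1) :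
    (x * y).toWord = x.toWord ++ y.toWord :=
  toWord_mul_of_isReduced <| isReduced_toWord.append isReduced_toWord fun a ha b hb hab =>
    absurd hab (h a ha b hb)

theorem toWord_mk_singleton_pow (c : α × Bool) (p : ℕ) :
    (mk [c] ^ p).toWord = replicate p c := by
  rw [pow_mk, flatten_replicate_singleton, toWord_mk, reduce_replicate]

theorem toWord_mk_singleton_pow_mul {c : α × Bool} {y : FreeGroup α} (p : ℕ)
    (hy : ∀ b ∈ y.toWord.head?, b ≠ (c.1, !c.2)) :
    (mk [c] ^ p * y).toWord = replicate p c ++ y.toWord := by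
  rw [← toWord_mk_singleton_pow]
  refine toWord_mul_of_isReduced ?_
  rw [toWord_mk_singleton_pow]
  refine (isChain_replicate_of_rel p fun _ => rfl).append isReduced_toWord fun a ha b hb hab => ?_
  obtain rfl := eq_of_mem_replicate (mem_of_mem_getLast? ha)
  by_contra hne
  exact hy b hb (Prod.ext hab.symm (Bool.eq_not.2 (Ne.symm hne)))

theorem pair_prefix_toWord_mk_singleton_pow_mul {c : α × Bool} {y : FreeGroup α} {p : ℕ}
    (hp : 3 ≤ p) (hy : ¬[(c.1, !c.2), (c.1, !c.2)] <+: y.toWord) :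
    [c, c] <+: (mk [c] ^ p * y).toWord := by
  have pair_prefix : ∀ q l, 2 ≤ q → [c, c] <+: replicate q c ++ l := fun q l hq => by
    obtain ⟨k, rfl⟩ := Nat.exists_eq_add_of_le' hq
    exact ⟨replicate k c ++ l, by simp [replicate_succ]⟩
  rcases hyw : y.toWord with _ | ⟨b, t⟩
  · rw [toWord_mk_singleton_pow_mul p (by simp [hyw]), hyw]
    exact pair_prefix p [] (by omega)
  by_cases hb : b = (c.1, !c.2)
  · subst hb
    have ht : (mk t).toWord = t := by
      rw [toWord_mk, IsReduced.reduce_eq]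
      exact isReduced_toWord.infix (hyw ▸ suffix_cons _ _).isInfix
    have hy_eq : y = (mk [c])⁻¹ * mk t := by
      rw [inv_mk, mul_mk, ← mk_toWord (x := y), hyw]
      rfl
    have hpow : mk [c] ^ p * y = mk [c] ^ (p - 1) * mk t := by
      rw [hy_eq, ← pow_sub_one_mul (by omega : p ≠ 0), mul_assoc, mul_inv_cancel_left]
    have ht_head : ∀ b ∈ (mk t).toWord.head?, b ≠ (c.1, !c.2) := by
      rintro b hb rfl
      rw [ht] at hb
      obtain ⟨t', rfl⟩ := head?_eq_some_iff.1 hb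
      exact hy (hyw ▸ ⟨t', rfl⟩)
    rw [hpow, toWord_mk_singleton_pow_mul _ ht_head]
    exact pair_prefix _ _ (by omega)
  · rw [toWord_mk_singleton_pow_mul p (by simpa [hyw] using hb), hyw]
    exact pair_prefix p _ (by omega)

end Words

section Prefix

variable {β : Type*} {R : β → β → Prop} {u₁ u₂ x : List β} {c₁ c₂ : β}

theorem length_le_of_prefix_of_prefix (hu₂ : List.IsChain R (u₂ ++ [c₂])) (hc₁ : ¬R c₁ c₁)
    (h₁ : u₁ ++ [c₁, c₁] <+: x) (h₂ : u₂ ++ [c₂] <+: x) : u₂.length ≤ u₁.length := by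
  by_contra! hlt
  have hpre : u₁ ++ [c₁, c₁] <+: u₂ ++ [c₂] :=
    prefix_of_prefix_length_le h₁ h₂ (by simp; omega)
  have hinf : [c₁, c₁] <:+: u₂ ++ [c₂] := (suffix_append u₁ _).isInfix.trans hpre.isInfix
  exact hc₁ (by simpa using hu₂.infix hinf)

theorem eq_of_prefix_of_prefix (hu₁ : List.IsChain R (u₁ ++ [c₁]))
    (hu₂ : List.IsChain R (u₂ ++ [c₂])) (hc₁ : ¬R c₁ c₁) (hc₂ : ¬R c₂ c₂)
    (h₁ : u₁ ++ [c₁, c₁] <+: x) (h₂ : u₂ ++ [c₂, c₂] <+: x) :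
    u₁ = u₂ ∧ c₁ = c₂ := by
  have shorten {u : List β} {c : β} (h : u ++ [c, c] <+: x) : u ++ [c] <+: x :=
    (prefix_append (u ++ [c]) [c]).trans (by simpa using h)
  have hlen : u₁.length = u₂.length :=
    le_antisymm (length_le_of_prefix_of_prefix hu₁ hc₂ h₂ (shorten h₁))
      (length_le_of_prefix_of_prefix hu₂ hc₁ h₁ (shorten h₂))
  have heq := (prefix_of_prefix_length_le h₁ h₂ (by simp [hlen])).eq_of_length (by simp [hlen])
  obtain ⟨rfl, hc⟩ := append_inj heq hlen
  exact ⟨rfl, by simpa using hc⟩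

end Prefix

section PingPong

theorem EndsWithH.fst_eq_one {u : F2} (hu : EndsWithH u) : ∀ a ∈ u.toWord.getLast?, a.1 = 1 := by
  intro a ha
  rcases hu with hu | hu
  · simp [hu] at ha
  · simpa [Option.mem_def.1 ha] using hu

theorem StartsWithH.inv {u : F2} (hu : StartsWithH u) : EndsWithH u⁻¹ := by
  simpa [EndsWithH, StartsWithH, toWord_inv, invRev, getLast?_reverse] using hu

theorem AltGwithHpowers.inv {u : F2} (hu : AltGwithHpowers u) : AltGwithHpowers u⁻¹ := by
  change List.IsChain _ _ at hu ⊢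
  rw [toWord_inv, invRev, isChain_reverse, isChain_map]
  exact hu.imp fun a b hab ⟨hb, ha⟩ => hab ⟨ha, hb⟩

theorem toWord_mul_of_endsWithH {u y : F2} (hu : EndsWithH u) {c : Fin 2 × Bool}
    {l : List (Fin 2 × Bool)} (hc : c.1 = 0) (hy : c :: l <+: y.toWord) :
    (u * y).toWord = u.toWord ++ y.toWord := by
  refine toWord_mul_of_fst_ne fun a ha d hd => ?_
  obtain ⟨t, ht⟩ := hy
  rw [← ht, cons_append, head?_cons, Option.mem_some_iff] at hd
  simp [hu.fst_eq_one a ha, ← hd, hc]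

theorem isChain_toWord_append_singleton {u : F2} (halt : AltGwithHpowers u) (hend : EndsWithH u)
    (d : Fin 2 × Bool) :
    List.IsChain (fun a b : Fin 2 × Bool => ¬(a.1 = 0 ∧ b.1 = 0)) (u.toWord ++ [d]) :=
  List.IsChain.append halt (isChain_singleton d) fun a ha _ _ ⟨ha0, _⟩ => by
    simp [hend.fst_eq_one a ha] at ha0

/-- The reduced words beginning with `u g²` (for `b = true`) or `u g⁻²` (for `b = false`). -/
def pingSet (u : F2) (b : Bool) : Set F2 :=
  {x | u.toWord ++ [(0, b), (0, b)] <+: x.toWord}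

theorem one_notMem_pingSet (u : F2) (b : Bool) : (1 : F2) ∉ pingSet u b := by
  simp [pingSet]

theorem eq_of_mem_pingSet {u₁ u₂ x : F2} {b₁ b₂ : Bool}
    (halt₁ : AltGwithHpowers u₁) (hend₁ : EndsWithH u₁)
    (halt₂ : AltGwithHpowers u₂) (hend₂ : EndsWithH u₂)
    (h₁ : x ∈ pingSet u₁ b₁) (h₂ : x ∈ pingSet u₂ b₂) : u₁ = u₂ ∧ b₁ = b₂ := by
  obtain ⟨hu, hb⟩ := eq_of_prefix_of_prefix (isChain_toWord_append_singleton halt₁ hend₁ _)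
    (isChain_toWord_append_singleton halt₂ hend₂ _) (by simp) (by simp) h₁ h₂
  exact ⟨toWord_injective hu, congrArg Prod.snd hb⟩

theorem mul_pow_mul_mem_pingSet {p : ℕ} (hp : 3 ≤ p) {u w x : F2} {b : Bool}
    (hu : EndsWithH u) (hw : EndsWithH w⁻¹) (hx : x ∉ pingSet w⁻¹ !b) :
    u * mk [(0, b)] ^ p * w * x ∈ pingSet u b := by
  have hwx : ¬[((0 : Fin 2), !b), (0, !b)] <+: (w * x).toWord := by
    intro hpre
    apply hx
    rw [pingSet, Set.mem_ofPred_eq, ← inv_mul_cancel_left w x,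
      toWord_mul_of_endsWithH hw rfl hpre]
    exact (prefix_append_right_inj _).2 hpre
  have hz := pair_prefix_toWord_mk_singleton_pow_mul (c := ((0 : Fin 2), b)) hp hwx
  rw [pingSet, Set.mem_ofPred_eq, mul_assoc, mul_assoc, toWord_mul_of_endsWithH hu rfl hz]
  exact (prefix_append_right_inj _).2 hz

end PingPong

theorem altGwithHpowers_h_pow (k : ℕ) : AltGwithHpowers (h ^ k) := by
  change List.IsChain _ _
  rw [h, toWord_of_pow]
  exact isChain_replicate_of_rel k (by simp)

theorem endsWithH_h_pow (k : ℕ) : EndsWithH (h ^ k) := by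
  rcases k with _ | k <;> simp [EndsWithH, h, getLast?_replicate]

theorem startsWithH_h_pow (k : ℕ) : StartsWithH (h ^ k) := by
  rcases k with _ | k <;> simp [StartsWithH, h, head?_replicate]

section Injectivity

variable {ι : Type} {p : ℕ} (hp : 3 ≤ p) {v v' : ι → F2}
  (halt : ∀ i, AltGwithHpowers (v i)) (halt' : ∀ i, AltGwithHpowers (v' i))
  (hend : ∀ i, EndsWithH (v i)) (hstart : ∀ i, StartsWithH (v' i))
  (hv : Function.Injective v) (hv' : Function.Injective v')
include hp halt halt' hend hstart hv hv'

theorem injective_lift_of_nontrivial [Nontrivial ι] :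
    Function.Injective (FreeGroup.lift fun i => v i * g ^ p * v' i) := by
  set a : ι → F2 := fun i => v i * g ^ p * v' i
  have hX : ∀ i, a i • (pingSet (v' i)⁻¹ false)ᶜ ⊆ pingSet (v i) true := fun i =>
    Set.smul_set_subset_iff.2 fun _ hx => mul_pow_mul_mem_pingSet hp (hend i) (hstart i).inv hx
  have hY : ∀ i, a⁻¹ i • (pingSet (v i) true)ᶜ ⊆ pingSet (v' i)⁻¹ false := fun i => by
    have ha : a⁻¹ i = (v' i)⁻¹ * mk [(0, false)] ^ p * (v i)⁻¹ := by
      simp [a, g, FreeGroup.of, inv_mk, invRev, mul_assoc]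
    rw [ha]
    exact Set.smul_set_subset_iff.2 fun _ hx =>
      mul_pow_mul_mem_pingSet hp (hstart i).inv (by rw [inv_inv]; exact hend i) (by rwa [inv_inv])
  refine injective_lift_of_ping_pong a (fun i => pingSet (v i) true)
    (fun i => pingSet (v' i)⁻¹ false) (fun i => ⟨_, hX i (Set.smul_mem_smul_set
      (one_notMem_pingSet (v' i)⁻¹ false))⟩) ?_ ?_ ?_ hX hY
  · exact fun i j hij => Set.disjoint_left.2 fun x hi hj =>
      hij (hv (eq_of_mem_pingSet (halt i) (hend i) (halt j) (hend j) hi hj).1)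
  · exact fun i j hij => Set.disjoint_left.2 fun x hi hj =>
      hij (hv' (inv_injective (eq_of_mem_pingSet (halt' i).inv (hstart i).inv (halt' j).inv
        (hstart j).inv hi hj).1))
  · exact fun i j => Set.disjoint_left.2 fun x hi hj => Bool.noConfusion
      (eq_of_mem_pingSet (halt i) (hend i) (halt' j).inv (hstart j).inv hi hj).2

theorem injective_lift_of_finite [Finite ι] :
    Function.Injective (FreeGroup.lift fun i => v i * g ^ p * v' i) := by
  obtain ⟨N, hN⟩ :=
    (Set.finite_range fun i => (v i).toWord.length + (v' i).toWord.length).bddAbove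
  have hlt (i : ι) : (v i).toWord.length + (v' i).toWord.length < N + 1 :=
    Nat.lt_succ_of_le (hN ⟨i, rfl⟩)
  set pad : Fin 2 → F2 := fun k => h ^ (N + 1 + k)
  have pad_length (k : Fin 2) : (pad k).toWord.length = N + 1 + k := by
    simp [pad, h]
  have pad_injective : Function.Injective pad := fun k₁ k₂ hk =>
    Fin.ext (by simpa [pad_length] using congrArg (fun x => x.toWord.length) hk)
  have pad_ne {u : ι → F2} (hu : ∀ i, (u i).toWord.length < N + 1) (i : ι) (k : Fin 2) :
      u i ≠ pad k := fun hik => by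
    have := pad_length k ▸ hik ▸ hu i
    omega
  have := nontrivial_of_ne (Sum.inr 0 : ι ⊕ Fin 2) (Sum.inr 1) (by simp)
  have hinj := injective_lift_of_nontrivial hp (v := Sum.elim v pad) (v' := Sum.elim v' pad)
    (Sum.forall.2 ⟨halt, fun _ => altGwithHpowers_h_pow _⟩)
    (Sum.forall.2 ⟨halt', fun _ => altGwithHpowers_h_pow _⟩)
    (Sum.forall.2 ⟨hend, fun _ => endsWithH_h_pow _⟩)
    (Sum.forall.2 ⟨hstart, fun _ => startsWithH_h_pow _⟩)
    (hv.sumElim pad_injective (pad_ne fun i => by have := hlt i; omega))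
    (hv'.sumElim pad_injective (pad_ne fun i => by have := hlt i; omega))
  have hcomp : FreeGroup.lift (fun i => v i * g ^ p * v' i) =
      (FreeGroup.lift fun j => Sum.elim v pad j * g ^ p * Sum.elim v' pad j).comp
        (FreeGroup.map Sum.inl) := by
    ext i
    simp
  rw [hcomp, MonoidHom.coe_comp]
  exact hinj.comp (map_injective Sum.inl_injective)

end Injectivity

theorem stmt_0 (p : ℕ) (hp : 3 ≤ p) (n : ℕ) (v v' : Fin n → F2)
    (halt : ∀ i, AltGwithHpowers (v i)) (halt' : ∀ i, AltGwithHpowers (v' i))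
    (hend : ∀ i, EndsWithH (v i)) (hstart : ∀ i, StartsWithH (v' i))
    (hlen : StrictMono fun i => (v i).toWord.length)
    (hlen' : StrictMono fun i => (v' i).toWord.length) :
    (∀ w : FreeGroup (Fin n), w ≠ 1 →
        FreeGroup.lift (fun i => v i * g ^ p * v' i) w ≠ 1) ∧
      Function.Injective (FreeGroup.lift (fun i => v i * g ^ p * v' i)) := by
  have hinj := injective_lift_of_finite hp halt halt' hend hstart
    (hlen.injective.of_comp (f := fun x : F2 => x.toWord.length))
    (hlen'.injective.of_comp (f := fun x : F2 => x.toWord.length))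
  exact ⟨fun w hw => (hinj.ne_iff' (_root_.map_one _)).2 hw, hinj⟩

end Stmt0
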